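/- Suppose real numbers μ₁ ≥ μ₂ ≥ ... ≥ μₙ satisfy Σᵢ arctan(μᵢ) = Θ − nφ, arctan(μ₁) = π/2 − φ, and μᵢ ≥ −tan(θ + φ) for all i, where θ = (π/2 − Θ)/(n−1), Θ ∈ (−(n−2)π/2, π/2), φ ∈ (0, π/2 − θ). Then μᵢ = −tan(θ + φ) for all 2 ≤ i ≤ n. -/
import Mathlib


open Real

/-- Eigenvalue rigidity at a blow-up point: if `μ₁ ≥ ... ≥ μₙ` satisfy
`Σ arctan μᵢ = Θ - nφ`, `arctan μ₁ = π/2 - φ`, and `μᵢ ≥ -tan(θ + φ)`, with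
`θ = (π/2 - Θ)/(n-1)`, then `μᵢ = -tan(θ + φ)` for all `2 ≤ i ≤ n`. -/
theorem stmt7 (n : ℕ) (hn : 2 ≤ n) (Θ θ φ : ℝ)
    (hΘ1 : -((n : ℝ) - 2) * π / 2 < Θ) (hΘ2 : Θ < π / 2)
    (hθ : θ = (π / 2 - Θ) / ((n : ℝ) - 1))
    (hφ1 : 0 < φ) (hφ2 : φ < π / 2 - θ)
    (μ : Fin n → ℝ) (hmono : Antitone μ)
    (hsum : ∑ i, Real.arctan (μ i) = Θ - n * φ)
    (h1 : Real.arctan (μ ⟨0, by omega⟩) = π / 2 - φ)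
    (hlb : ∀ i, -Real.tan (θ + φ) ≤ μ i) :
    ∀ i : Fin n, 1 ≤ (i : ℕ) → μ i = -Real.tan (θ + φ) := by
  have hn2 : (2:ℝ) ≤ (n:ℝ) := by exact_mod_cast hn
  have hnR : ((n:ℝ) - 1) ≠ 0 := by linarith
  set c := θ + φ with hc
  have hθpos : 0 < θ := by
    rw [hθ]
    exact div_pos (by linarith) (by linarith)
  have hcpos : 0 < c := by simp only [hc]; linarith
  have hclt : c < π/2 := by simp only [hc]; linarith
  have harc : ∀ j : Fin n, -c ≤ Real.arctan (μ j) := by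
    intro j
    have h2 : Real.arctan (-Real.tan c) ≤ Real.arctan (μ j) :=
      Real.arctan_strictMono.monotone (hlb j)
    rwa [Real.arctan_neg, Real.arctan_tan (by linarith) hclt] at h2
  set z : Fin n := ⟨0, by omega⟩ with hz
  set s : Finset (Fin n) := Finset.univ.erase z with hs
  have hcard : s.card = n - 1 := by
    rw [hs, Finset.card_erase_of_mem (Finset.mem_univ z), Finset.card_univ,
      Fintype.card_fin]
  have hsplit : Real.arctan (μ z) + ∑ x ∈ s, Real.arctan (μ x)
      = ∑ i, Real.arctan (μ i) := by
    rw [hs]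
    exact Finset.add_sum_erase Finset.univ (fun x => Real.arctan (μ x)) (Finset.mem_univ z)
  have hsum2 : ∑ x ∈ s, Real.arctan (μ x) = Θ - n * φ - (π/2 - φ) := by
    rw [hsum, h1] at hsplit
    have : Real.arctan (μ z) = π/2 - φ := h1
    linarith [hsplit]
  have hconst : ∑ x ∈ s, (-c) = Θ - n * φ - (π/2 - φ) := by
    rw [Finset.sum_const, hcard, nsmul_eq_mul]
    have hcast : ((n - 1 : ℕ) : ℝ) = (n:ℝ) - 1 := by
      have : (1:ℕ) ≤ n := by omega
      push_cast [this]; ring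
    rw [hcast]
    have hθ' : θ * ((n:ℝ) - 1) = π/2 - Θ := by
      rw [hθ]; field_simp
    have h5 : ((n:ℝ)-1) * -c = -(θ*((n:ℝ)-1)) - φ*((n:ℝ)-1) := by
      simp only [hc]; ring
    rw [h5, hθ']; ring
  have heq : ∀ x ∈ s, -c = Real.arctan (μ x) :=
    (Finset.sum_eq_sum_iff_of_le (s := s) (f := fun _ => -c)
      (g := fun i => Real.arctan (μ i)) (fun i _ => harc i)).mp
      (by rw [hsum2, hconst])
  intro i hi
  have hiz : i ∈ s := by
    rw [hs]
    refine Finset.mem_erase.mpr ⟨?_, Finset.mem_univ i⟩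
    intro h
    rw [h] at hi
    simp [hz] at hi
  have h3 : Real.arctan (μ i) = -c := (heq i hiz).symm
  have h4 : μ i = Real.tan (-c) := by
    rw [← h3, Real.tan_arctan]
  rw [h4, Real.tan_neg]
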